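/- Let C be a finite set of candidates, PW = {pw_1,…,pw_l} ⊆ C a nonempty set of possible winners, and let P^0, P^1, …, P^T be preference orders on C such that for every t < T, the order P^{t+1} locally dominates P^t (given PW). Then for all 0 ≤ t ≤ τ ≤ T: (i) P^0, P^t and P^τ order the elements of PW identically; (ii) for every a ∈ {1,…,l−1}, the segment sizes satisfy |[pw_a, P^0, pw_{a+1}]| ≤ |[pw_a, P^t, pw_{a+1}]| ≤ |[pw_a, P^τ, pw_{a+1}]| (where pw_1,…,pw_l are enumerated in decreasing order of P^0); and (iii) if t < τ then the total Σ_{a=1}^{l−1} |[pw_a, P^t, pw_{a+1}]| is strictly smaller than Σ_{a=1}^{l−1} |[pw_a, P^τ, pw_{a+1}]|. -/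

import Mathlib

/-- A preference order: a strict total order on candidates. -/
def IsPref {C : Type*} (P : C → C → Prop) : Prop :=
  (∀ a b : C, a ≠ b → P a b ∨ P b a) ∧ (∀ a : C, ¬ P a a) ∧
    ∀ a b c : C, P a b → P b c → P a c

/-- The Borda score that preference order `P` gives candidate `c`. -/
noncomputable def borda {C : Type*} [Fintype C] (P : C → C → Prop) (c : C) : ℕ :=
  1 + Set.ncard {c' : C | P c c'}

/-- `c` is the outcome `F(s, P)`: it beats every other candidate either in total score
`s + borda`, or on equal total score by the tie-breaking order `tb`. -/
def IsWinner {C : Type*} [Fintype C] (tb : C → C → Prop) (s : C → ℕ)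
    (P : C → C → Prop) (c : C) : Prop :=
  ∀ c' : C, c' ≠ c →
    s c' + borda P c' < s c + borda P c ∨
      (s c' + borda P c' = s c + borda P c ∧ tb c c')

/-- `s` is a possible world for the set `PW` of possible winners. -/
def PossibleWorld {C : Type*} [Fintype C] (tb : C → C → Prop) (PW : Set C)
    (s : C → ℕ) : Prop :=
  ∀ R : C → C → Prop, IsPref R → ∀ c : C, IsWinner tb s R c → c ∈ PW

/-- `P'` locally dominates `P` given the possible-winner set `PW`. -/
def LocDom {C : Type*} [Fintype C] (tb : C → C → Prop) (PW : Set C)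
    (P' P : C → C → Prop) : Prop :=
  (∀ s : C → ℕ, PossibleWorld tb PW s →
      ∀ w' w : C, IsWinner tb s P' w' → IsWinner tb s P w → w' = w ∨ P w' w) ∧
  ∃ s : C → ℕ, PossibleWorld tb PW s ∧
      ∃ w' w : C, IsWinner tb s P' w' ∧ IsWinner tb s P w ∧ P w' w

/-- The (closed) segment `[c, P, c']` of candidates between `c` and `c'`. -/
def seg {C : Type*} (P : C → C → Prop) (c c' : C) : Set C :=
  {d : C | (d = c ∨ P c d) ∧ (d = c' ∨ P d c')}


section Aux

variable {C : Type*} [Fintype C]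

lemma pref_asymm {P : C → C → Prop} (h : IsPref P) {a b : C} (hab : P a b) : ¬ P b a :=
  fun hba => h.2.1 a (h.2.2 a b a hab hba)

lemma pref_ne {P : C → C → Prop} (h : IsPref P) {a b : C} (hab : P a b) : a ≠ b := by
  rintro rfl; exact h.2.1 a hab

lemma borda_pos (P : C → C → Prop) (c : C) : 1 ≤ borda P c := Nat.le_add_right 1 _

lemma borda_le {P : C → C → Prop} (h : IsPref P) (c : C) : borda P c ≤ Fintype.card C := by
  have hmem : c ∉ {c' : C | P c c'} := h.2.1 c
  have h1 : insert c {c' : C | P c c'} ⊆ Set.univ := Set.subset_univ _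
  have h2 := Set.ncard_le_ncard h1 (Set.toFinite _)
  rw [Set.ncard_insert_of_notMem hmem (Set.toFinite _)] at h2
  rw [Set.ncard_univ, Nat.card_eq_fintype_card] at h2
  unfold borda
  omega

lemma borda_lt {P : C → C → Prop} (h : IsPref P) {a b : C} (hab : P a b) :
    borda P b < borda P a := by
  have hmem : b ∉ {c : C | P b c} := h.2.1 b
  have hsub : insert b {c : C | P b c} ⊆ {c : C | P a c} := by
    intro d hd
    rcases Set.mem_insert_iff.mp hd with rfl | hd'
    · exact hab
    · exact h.2.2 _ _ _ hab hd'
  have h2 := Set.ncard_le_ncard hsub (Set.toFinite _)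
  rw [Set.ncard_insert_of_notMem hmem (Set.toFinite _)] at h2
  unfold borda
  omega

lemma seg_card {P : C → C → Prop} (h : IsPref P) {a b : C} (hab : P a b) :
    (seg P a b).ncard + borda P b = borda P a + 1 := by
  have hdisj : Disjoint (seg P a b) {d : C | P b d} := by
    rw [Set.disjoint_left]
    rintro d ⟨h1, h2⟩ hd
    rcases h2 with rfl | h2
    · exact absurd hd (h.2.1 _)
    · exact absurd (h.2.2 _ _ _ hd h2) (h.2.1 _)
  have hset : insert a {d : C | P a d} = seg P a b ∪ {d : C | P b d} := by
    ext d
    simp only [Set.mem_insert_iff, Set.mem_union, Set.mem_setOf_eq, seg]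
    constructor
    · rintro (rfl | had)
      · exact Or.inl ⟨Or.inl rfl, Or.inr hab⟩
      · by_cases hdb : d = b
        · exact Or.inl ⟨Or.inr had, Or.inl hdb⟩
        · rcases h.1 d b hdb with h1 | h2
          · exact Or.inl ⟨Or.inr had, Or.inr h1⟩
          · exact Or.inr h2
    · rintro (⟨h1, _⟩ | hbd)
      · rcases h1 with rfl | h1
        · exact Or.inl rfl
        · exact Or.inr h1
      · exact Or.inr (h.2.2 _ _ _ hab hbd)
  have h1 : (insert a {d : C | P a d}).ncard = {d : C | P a d}.ncard + 1 :=
    Set.ncard_insert_of_notMem (h.2.1 a) (Set.toFinite _)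
  have h2 : (seg P a b ∪ {d : C | P b d}).ncard
      = (seg P a b).ncard + {d : C | P b d}.ncard :=
    Set.ncard_union_eq hdisj (Set.toFinite _) (Set.toFinite _)
  rw [hset, h2] at h1
  unfold borda
  omega

lemma pw_world {tb : C → C → Prop} {l : ℕ} (hl : 0 < l) (pw : Fin l → C) (s : C → ℕ)
    (h0 : ∀ c, c ∉ Set.range pw → s c + Fintype.card C ≤ s (pw ⟨0, hl⟩)) :
    PossibleWorld tb (Set.range pw) s := by
  intro R hR c hc
  by_contra hcn
  have hne : pw ⟨0, hl⟩ ≠ c := by rintro rfl; exact hcn (Set.mem_range_self _)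
  have h1 := hc _ hne
  have h2 := borda_le hR c
  have h3 := borda_pos R (pw ⟨0, hl⟩)
  have h4 := h0 c hcn
  rcases h1 with h | ⟨h, _⟩ <;> omega

lemma contra_world {tb : C → C → Prop} {l : ℕ} (hl : 0 < l) (pw : Fin l → C)
    {P P' : C → C → Prop} (hP : IsPref P) (hP' : IsPref P') (x y : C)
    (hx : x ∈ Set.range pw) (hy : y ∈ Set.range pw) (hxy : x ≠ y) (v : ℕ)
    (hwx : v + borda P y < borda P x ∨ (v + borda P y = borda P x ∧ tb x y))
    (hwy : borda P' x < v + borda P' y ∨ (borda P' x = v + borda P' y ∧ tb y x)) :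
    ∃ s : C → ℕ, PossibleWorld tb (Set.range pw) s ∧
      IsWinner tb s P x ∧ IsWinner tb s P' y := by
  classical
  set n := Fintype.card C with hn
  have hn1 : 1 ≤ n := Fintype.card_pos_iff.mpr ⟨x⟩
  have hyx : y ≠ x := Ne.symm hxy
  set s : C → ℕ := fun c => if c = x then 4*n else if c = y then 4*n + v
      else if c ∈ Set.range pw then n + 1 else 0 with hsdef
  have hsx : s x = 4*n := by simp [hsdef]
  have hsy : s y = 4*n + v := by simp [hsdef, hyx]
  have hso : ∀ c, c ≠ x → c ≠ y → s c ≤ n + 1 := by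
    intro c h1 h2
    simp only [hsdef, if_neg h1, if_neg h2]
    split_ifs <;> omega
  have hslow : ∀ c, c ∉ Set.range pw → s c = 0 := by
    intro c hc
    have h1 : c ≠ x := by rintro rfl; exact hc hx
    have h2 : c ≠ y := by rintro rfl; exact hc hy
    simp only [hsdef, if_neg h1, if_neg h2, if_neg hc]
  have hs0 : n + 1 ≤ s (pw ⟨0, hl⟩) := by
    by_cases h1 : pw ⟨0, hl⟩ = x
    · rw [h1, hsx]; omega
    · by_cases h2 : pw ⟨0, hl⟩ = y
      · rw [h2, hsy]; omega
      · simp only [hsdef, if_neg h1, if_neg h2, if_pos (Set.mem_range_self _)]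
        omega
  refine ⟨s, ?_, ?_, ?_⟩
  · apply pw_world hl pw s
    intro c hc
    rw [hslow c hc]
    omega
  · intro c' hc'
    by_cases h2 : c' = y
    · subst h2
      rw [hsx, hsy]
      rcases hwx with h | ⟨h, ht⟩
      · left; omega
      · right; exact ⟨by omega, ht⟩
    · left
      have hb0 := hso c' hc' h2
      have hb1 := borda_le hP c'
      have hb2 := borda_pos P x
      rw [hsx]
      omega
  · intro c' hc'
    by_cases h2 : c' = x
    · subst h2
      rw [hsx, hsy]
      rcases hwy with h | ⟨h, ht⟩
      · left; omega
      · right; exact ⟨by omega, ht⟩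
    · left
      have hb0 := hso c' h2 hc'
      have hb1 := borda_le hP' c'
      have hb2 := borda_pos P' y
      rw [hsy]
      omega

lemma gap_mono {tb : C → C → Prop} (htb : IsPref tb) {l : ℕ} (hl : 0 < l)
    (pw : Fin l → C) {P P' : C → C → Prop} (hP : IsPref P) (hP' : IsPref P')
    (hld : LocDom tb (Set.range pw) P' P) {x y : C} (hx : x ∈ Set.range pw)
    (hy : y ∈ Set.range pw) (hxy : P x y) :
    borda P x + borda P' y ≤ borda P' x + borda P y := by
  by_contra hcon
  push_neg at hcon
  have hne : x ≠ y := pref_ne hP hxy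
  have hglt : borda P y < borda P x := borda_lt hP hxy
  rcases htb.1 x y hne with htbxy | htbyx
  · obtain ⟨s, hs, hwx, hwy⟩ := contra_world hl pw hP hP' x y hx hy hne
      (borda P x - borda P y) (Or.inr ⟨by omega, htbxy⟩) (Or.inl (by omega))
    rcases hld.1 s hs y x hwy hwx with rfl | hyx
    · exact hne rfl
    · exact pref_asymm hP hxy hyx
  · have hside : borda P' x < borda P x - borda P y - 1 + borda P' y ∨
        (borda P' x = borda P x - borda P y - 1 + borda P' y ∧ tb y x) := by
      rcases Nat.lt_or_ge (borda P' x) (borda P x - borda P y - 1 + borda P' y) with h | h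
      · exact Or.inl h
      · exact Or.inr ⟨by omega, htbyx⟩
    obtain ⟨s, hs, hwx, hwy⟩ := contra_world hl pw hP hP' x y hx hy hne
      (borda P x - borda P y - 1) (Or.inl (by omega)) hside
    rcases hld.1 s hs y x hwy hwx with rfl | hyx
    · exact hne rfl
    · exact pref_asymm hP hxy hyx

lemma locdom_agree {tb : C → C → Prop} (htb : IsPref tb) {l : ℕ} (hl : 0 < l)
    (pw : Fin l → C) {P P' : C → C → Prop} (hP : IsPref P) (hP' : IsPref P')
    (hld : LocDom tb (Set.range pw) P' P) {x y : C} (hx : x ∈ Set.range pw)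
    (hy : y ∈ Set.range pw) (hxy : P x y) : P' x y := by
  by_contra hnn
  have hne : x ≠ y := pref_ne hP hxy
  rcases hP'.1 x y hne with h | h
  · exact hnn h
  · have h1 := gap_mono htb hl pw hP hP' hld hx hy hxy
    have h2 := borda_lt hP hxy
    have h3 := borda_lt hP' h
    omega

lemma order_step {tb : C → C → Prop} (htb : IsPref tb) {l : ℕ} (hl : 0 < l)
    (pw : Fin l → C) {P P' : C → C → Prop} (hP : IsPref P) (hP' : IsPref P')
    (hld : LocDom tb (Set.range pw) P' P)
    (hord : ∀ a b : Fin l, P (pw a) (pw b) ↔ a < b) :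
    ∀ a b : Fin l, P' (pw a) (pw b) ↔ a < b := by
  intro a b
  constructor
  · intro h
    rcases lt_trichotomy a b with hab | rfl | hba
    · exact hab
    · exact absurd h (hP'.2.1 _)
    · exact absurd h (pref_asymm hP'
        (locdom_agree htb hl pw hP hP' hld (Set.mem_range_self _) (Set.mem_range_self _)
          ((hord b a).mpr hba)))
  · intro h
    exact locdom_agree htb hl pw hP hP' hld (Set.mem_range_self _) (Set.mem_range_self _)
      ((hord a b).mpr h)

lemma seg_step {tb : C → C → Prop} (htb : IsPref tb) {l : ℕ} (hl : 0 < l)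
    (pw : Fin l → C) {P P' : C → C → Prop} (hP : IsPref P) (hP' : IsPref P')
    (hld : LocDom tb (Set.range pw) P' P)
    (hord : ∀ a b : Fin l, P (pw a) (pw b) ↔ a < b)
    (a : ℕ) (h : a + 1 < l) :
    (seg P (pw ⟨a, Nat.lt_of_succ_lt h⟩) (pw ⟨a + 1, h⟩)).ncard ≤
      (seg P' (pw ⟨a, Nat.lt_of_succ_lt h⟩) (pw ⟨a + 1, h⟩)).ncard := by
  have hlt : (⟨a, Nat.lt_of_succ_lt h⟩ : Fin l) < ⟨a + 1, h⟩ := by simp [Fin.lt_def]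
  have hPxy : P (pw ⟨a, Nat.lt_of_succ_lt h⟩) (pw ⟨a + 1, h⟩) := (hord _ _).mpr hlt
  have hP'xy : P' (pw ⟨a, Nat.lt_of_succ_lt h⟩) (pw ⟨a + 1, h⟩) :=
    locdom_agree htb hl pw hP hP' hld (Set.mem_range_self _) (Set.mem_range_self _) hPxy
  have e1 := seg_card hP hPxy
  have e2 := seg_card hP' hP'xy
  have hg := gap_mono htb hl pw hP hP' hld (Set.mem_range_self _) (Set.mem_range_self _) hPxy
  omega

lemma strict_step {tb : C → C → Prop} (htb : IsPref tb) {l : ℕ} (hl : 0 < l)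
    (pw : Fin l → C) {P P' : C → C → Prop} (hP : IsPref P) (hP' : IsPref P')
    (hld : LocDom tb (Set.range pw) P' P)
    (hord : ∀ a b : Fin l, P (pw a) (pw b) ↔ a < b) :
    (∑ a : Fin (l - 1),
        (seg P (pw ⟨a.1, Nat.lt_of_lt_of_le a.isLt (Nat.sub_le l 1)⟩)
          (pw ⟨a.1 + 1, Nat.add_lt_of_lt_sub a.isLt⟩)).ncard) <
      ∑ a : Fin (l - 1),
        (seg P' (pw ⟨a.1, Nat.lt_of_lt_of_le a.isLt (Nat.sub_le l 1)⟩)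
          (pw ⟨a.1 + 1, Nat.add_lt_of_lt_sub a.isLt⟩)).ncard := by
  have hord' : ∀ a b : Fin l, P' (pw a) (pw b) ↔ a < b :=
    order_step htb hl pw hP hP' hld hord
  have hterm : ∀ a : Fin (l - 1),
      (seg P (pw ⟨a.1, Nat.lt_of_lt_of_le a.isLt (Nat.sub_le l 1)⟩)
        (pw ⟨a.1 + 1, Nat.add_lt_of_lt_sub a.isLt⟩)).ncard ≤
      (seg P' (pw ⟨a.1, Nat.lt_of_lt_of_le a.isLt (Nat.sub_le l 1)⟩)
        (pw ⟨a.1 + 1, Nat.add_lt_of_lt_sub a.isLt⟩)).ncard :=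
    fun a => seg_step htb hl pw hP hP' hld hord a.1 (Nat.add_lt_of_lt_sub a.isLt)
  by_contra hsum
  have heq : ∀ a : Fin (l - 1),
      (seg P (pw ⟨a.1, Nat.lt_of_lt_of_le a.isLt (Nat.sub_le l 1)⟩)
        (pw ⟨a.1 + 1, Nat.add_lt_of_lt_sub a.isLt⟩)).ncard =
      (seg P' (pw ⟨a.1, Nat.lt_of_lt_of_le a.isLt (Nat.sub_le l 1)⟩)
        (pw ⟨a.1 + 1, Nat.add_lt_of_lt_sub a.isLt⟩)).ncard := by
    by_contra hne
    push_neg at hne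
    obtain ⟨a, ha⟩ := hne
    exact hsum (Finset.sum_lt_sum (fun i _ => hterm i)
      ⟨a, Finset.mem_univ a, lt_of_le_of_ne (hterm a) ha⟩)
  have key : ∀ a : ℕ, ∀ ha : a < l,
      borda P' (pw ⟨a, ha⟩) + borda P (pw ⟨0, hl⟩)
        = borda P (pw ⟨a, ha⟩) + borda P' (pw ⟨0, hl⟩) := by
    intro a
    induction a with
    | zero => intro ha; exact Nat.add_comm _ _
    | succ k ih =>
      intro ha
      have hk : k < l := Nat.lt_of_succ_lt ha
      have hPk : P (pw ⟨k, hk⟩) (pw ⟨k + 1, ha⟩) := (hord _ _).mpr (by simp [Fin.lt_def])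
      have hP'k : P' (pw ⟨k, hk⟩) (pw ⟨k + 1, ha⟩) := (hord' _ _).mpr (by simp [Fin.lt_def])
      have e1 := seg_card hP hPk
      have e2 := seg_card hP' hP'k
      have e3 : (seg P (pw ⟨k, hk⟩) (pw ⟨k + 1, ha⟩)).ncard
          = (seg P' (pw ⟨k, hk⟩) (pw ⟨k + 1, ha⟩)).ncard := heq ⟨k, by omega⟩
      have e4 := ih hk
      omega
  obtain ⟨s, hs, w', w, hw', hw, hPw⟩ := hld.2
  obtain ⟨j, rfl⟩ := hs P' hP' w' hw'
  obtain ⟨i, rfl⟩ := hs P hP w hw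
  have hne : pw j ≠ pw i := pref_ne hP hPw
  have k1 : borda P' (pw i) + borda P (pw ⟨0, hl⟩)
      = borda P (pw i) + borda P' (pw ⟨0, hl⟩) := key i.1 i.isLt
  have k2 : borda P' (pw j) + borda P (pw ⟨0, hl⟩)
      = borda P (pw j) + borda P' (pw ⟨0, hl⟩) := key j.1 j.isLt
  have h1 := hw (pw j) hne
  have h2 := hw' (pw i) (Ne.symm hne)
  rcases h1 with h1 | ⟨h1, ht1⟩ <;> rcases h2 with h2 | ⟨h2, ht2⟩
  · omega
  · omega
  · omega
  · exact pref_asymm htb ht1 ht2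

end Aux

theorem statement5 {C : Type*} [Fintype C]
    (tb : C → C → Prop) (htb : IsPref tb)
    (l : ℕ) (hl : 0 < l) (pw : Fin l → C) (hinj : Function.Injective pw)
    (N : ℕ) (P : ℕ → C → C → Prop)
    (hP : ∀ t : ℕ, t ≤ N → IsPref (P t))
    (horder : ∀ a b : Fin l, P 0 (pw a) (pw b) ↔ a < b)
    (hdom : ∀ t : ℕ, t < N → LocDom tb (Set.range pw) (P (t + 1)) (P t)) :
    ∀ t τ : ℕ, t ≤ τ → τ ≤ N →
      ((∀ a b : Fin l,
          (P t (pw a) (pw b) ↔ P 0 (pw a) (pw b)) ∧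
          (P τ (pw a) (pw b) ↔ P 0 (pw a) (pw b))) ∧
       (∀ a : ℕ, ∀ h : a + 1 < l,
          (seg (P 0) (pw ⟨a, by omega⟩) (pw ⟨a + 1, h⟩)).ncard ≤
              (seg (P t) (pw ⟨a, by omega⟩) (pw ⟨a + 1, h⟩)).ncard ∧
            (seg (P t) (pw ⟨a, by omega⟩) (pw ⟨a + 1, h⟩)).ncard ≤
              (seg (P τ) (pw ⟨a, by omega⟩) (pw ⟨a + 1, h⟩)).ncard) ∧
       (t < τ →
          (∑ a : Fin (l - 1),
              (seg (P t) (pw ⟨a.1, by have := a.isLt; omega⟩)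
                (pw ⟨a.1 + 1, by have := a.isLt; omega⟩)).ncard) <
            ∑ a : Fin (l - 1),
              (seg (P τ) (pw ⟨a.1, by have := a.isLt; omega⟩)
                (pw ⟨a.1 + 1, by have := a.isLt; omega⟩)).ncard)) := by
  have horderT : ∀ t : ℕ, t ≤ N → ∀ a b : Fin l, P t (pw a) (pw b) ↔ a < b := by
    intro t
    induction t with
    | zero => exact fun _ => horder
    | succ k ih =>
      intro hk
      exact order_step htb hl pw (hP k (by omega)) (hP (k + 1) hk) (hdom k (by omega))
        (ih (by omega))
  have hsegmono : ∀ t τ : ℕ, t ≤ τ → τ ≤ N → ∀ a : ℕ, ∀ h : a + 1 < l,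
      (seg (P t) (pw ⟨a, by omega⟩) (pw ⟨a + 1, h⟩)).ncard ≤
        (seg (P τ) (pw ⟨a, by omega⟩) (pw ⟨a + 1, h⟩)).ncard := by
    intro t τ htτ
    induction τ, htτ using Nat.le_induction with
    | base => intro _ a h; exact le_refl _
    | succ τ' hτ' ih =>
      intro hN a h
      exact le_trans (ih (by omega) a h)
        (seg_step htb hl pw (hP τ' (by omega)) (hP (τ' + 1) hN) (hdom τ' (by omega))
          (horderT τ' (by omega)) a h)
  have hsummono : ∀ t τ : ℕ, t ≤ τ → τ ≤ N →
      (∑ a : Fin (l - 1),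
          (seg (P t) (pw ⟨a.1, by have := a.isLt; omega⟩)
            (pw ⟨a.1 + 1, by have := a.isLt; omega⟩)).ncard) ≤
        ∑ a : Fin (l - 1),
          (seg (P τ) (pw ⟨a.1, by have := a.isLt; omega⟩)
            (pw ⟨a.1 + 1, by have := a.isLt; omega⟩)).ncard := by
    intro t τ h1 h2
    exact Finset.sum_le_sum fun a _ => hsegmono t τ h1 h2 a.1 (by have := a.isLt; omega)
  intro t τ htτ hτN
  have htN : t ≤ N := le_trans htτ hτN
  refine ⟨?_, ?_, ?_⟩
  · intro a b
    exact ⟨(horderT t htN a b).trans (horder a b).symm,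
      (horderT τ hτN a b).trans (horder a b).symm⟩
  · intro a h
    exact ⟨hsegmono 0 t (Nat.zero_le _) htN a h, hsegmono t τ htτ hτN a h⟩
  · intro hlt
    exact lt_of_lt_of_le
      (strict_step htb hl pw (hP t (by omega)) (hP (t + 1) (by omega)) (hdom t (by omega))
        (horderT t (by omega)))
      (hsummono (t + 1) τ (by omega) hτN)
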